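/- For all −1 < a < 1 and 0 < δ ≤ 1/4, γ_δ(1 − δ²/2) > 1/(πδ²) − 2/√(πδ²(1 − δ²/4)) ≥ 16(1/π − √(16/(63π))) > 0, so the kernel γ_δ is strictly positive on [1 − δ²/2, 1]. -/

import Mathlib

open Real MeasureTheory


lemma aux3' : 16 * (1 / π - Real.sqrt (16 / (63 * π))) > 0 := by
  have hπ := Real.pi_pos
  have h1 : Real.sqrt (16 / (63 * π)) < 1 / π := by
    rw [Real.sqrt_lt' (by positivity)]
    rw [div_pow, one_pow, div_lt_div_iff₀ (by positivity) (by positivity)]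
    nlinarith [Real.pi_lt_d2, Real.pi_gt_three]
  nlinarith

set_option maxHeartbeats 1000000 in
lemma aux2' (δ : ℝ) (hδ0 : 0 < δ) (hδ : δ ≤ 1/4) :
    1 / (π * δ ^ 2) - 2 / Real.sqrt (π * δ ^ 2 * (1 - δ ^ 2 / 4)) ≥
      16 * (1 / π - Real.sqrt (16 / (63 * π))) := by
  have hπ := Real.pi_pos
  have hπlt := Real.pi_lt_d2
  set u := δ ^ 2 with hu
  have hu0 : 0 < u := by positivity
  have hu16 : u ≤ 1/16 := by nlinarith
  have harg : 0 < π * u * (1 - u/4) := mul_pos (mul_pos hπ hu0) (by linarith)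
  set A := Real.sqrt (π * u * (1 - u/4)) with hA
  have hA0 : 0 < A := Real.sqrt_pos.mpr harg
  have hA2 : A ^ 2 = π * u * (1 - u/4) := Real.sq_sqrt harg.le
  set B := Real.sqrt (63 * π) with hB
  have hB0 : 0 < B := Real.sqrt_pos.mpr (by positivity)
  have hB2 : B ^ 2 = 63 * π := Real.sq_sqrt (by positivity)
  have hsq : Real.sqrt (16 / (63 * π)) = 4 / B := by
    rw [show 16 / (63 * π) = (4 / B)^2 by rw [div_pow, hB2]; norm_num]
    exact Real.sqrt_sq (by positivity)
  rw [hsq]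
  clear_value u A B
  have step1 : 128 * π * u / 63 ≤ A := by
    rw [hA, Real.le_sqrt (by positivity) harg.le]
    nlinarith [mul_pos hπ hu0, mul_le_mul hπlt.le hu16 hu0.le (by norm_num : (0:ℝ) ≤ 3.15)]
  have hdiff : (B - 32*A) * (B + 32*A) = π * (63 - 1024*u + 256*u^2) := by
    have : B^2 - (32*A)^2 = π * (63 - 1024*u + 256*u^2) := by
      rw [hB2, mul_pow, hA2]; ring
    linear_combination this
  have step2 : 32 * A ≤ B := by
    have h1 : (32*A)^2 ≤ B^2 := by
      rw [hB2, mul_pow, hA2]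
      nlinarith [mul_nonneg (by linarith : (0:ℝ) ≤ 1/16 - u) (by linarith : (0:ℝ) ≤ 63/16 - u), hπ.le]
    nlinarith [h1, hA0, hB0]
  have key : 2*π*u*(B - 32*A) ≤ A*B*(1 - 16*u) := by
    have hABbig : 128*π^2*u ≤ A*B*(B + 32*A) := by
      have h63 : 128*π^2*u ≤ A*(63*π) := by nlinarith [step1, hπ]
      calc 128*π^2*u ≤ A*(63*π) := h63
        _ = A*(B*B) := by rw [show B*B = B^2 by ring, hB2]
        _ ≤ A*B*(B + 32*A) := by nlinarith [hA0.le, hB0.le, mul_pos hA0 hB0]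
    have hBA : (0:ℝ) < B + 32*A := by positivity
    rw [← mul_le_mul_iff_of_pos_right hBA]
    calc 2*π*u*(B-32*A)*(B+32*A) = 2*π*u*((B-32*A)*(B+32*A)) := by ring
      _ = 2*π*u*(π*(63 - 1024*u + 256*u^2)) := by rw [hdiff]
      _ ≤ 2*π*u*(π*(64*(1-16*u))) := by
          have h2πuπ : (0:ℝ) ≤ 2*π*u*π := by positivity
          gcongr 2*π*u*(π*?_)
          nlinarith
      _ = (1-16*u)*(128*π^2*u) := by ring
      _ ≤ (1-16*u)*(A*B*(B+32*A)) := mul_le_mul_of_nonneg_left hABbig (by linarith)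
      _ = A*B*(1-16*u)*(B+32*A) := by ring
  have e1 : 1/(π*u) - 2/A - 16*(1/π - 4/B)
      = (A*B*(1-16*u) - 2*π*u*(B-32*A))/(π*u*A*B) := by
    field_simp
    ring
  have h2 : 0 ≤ 1/(π*u) - 2/A - 16*(1/π - 4/B) := by
    rw [e1]
    exact div_nonneg (by linarith) (by positivity)
  linarith

set_option maxHeartbeats 1600000 in
/-- Positivity of the kernel `γ_δ`: for `−1 < a < 1` and `0 < δ ≤ 1/4`, the monotonically
increasing kernel `γ_δ` (with derivative
`γ_δ'(t) = √((1+a)/π)·2^{a/2} δ^{−(1+a)} (1−t)^{−(2−a)/2} (1+t)^{−1/2}` on its support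
`[1−δ²/2, 1]`, vanishing below it, and normalized by `2π∫γ_δ = 1`) satisfies
`γ_δ(1−δ²/2) > 1/(πδ²) − 2/√(πδ²(1−δ²/4)) ≥ 16(1/π − √(16/(63π))) > 0`,
hence `γ_δ > 0` on `[1−δ²/2, 1]`. -/
theorem kernel_positivity
    (a δ : ℝ) (ha1 : -1 < a) (ha2 : a < 1) (hδ0 : 0 < δ) (hδ : δ ≤ 1 / 4)
    (γ : ℝ → ℝ)
    (hzero : ∀ t : ℝ, t < 1 - δ ^ 2 / 2 → γ t = 0)
    (hderiv : ∀ t ∈ Set.Ioo (1 - δ ^ 2 / 2) 1,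
      HasDerivAt γ
        (Real.sqrt ((1 + a) / π) * (2 : ℝ) ^ (a / 2) * δ ^ (-(1 + a)) *
          (1 - t) ^ (-((2 - a) / 2)) * (1 + t) ^ (-(1 / 2 : ℝ))) t)
    (hcont : ContinuousOn γ (Set.Ico (1 - δ ^ 2 / 2) 1))
    (hmono : MonotoneOn γ (Set.Icc (1 - δ ^ 2 / 2) 1))
    (hint : IntegrableOn γ (Set.Ioo (-1 : ℝ) 1))
    (hnorm : 2 * π * ∫ t in (-1 : ℝ)..1, γ t = 1) :
    γ (1 - δ ^ 2 / 2) > 1 / (π * δ ^ 2) - 2 / Real.sqrt (π * δ ^ 2 * (1 - δ ^ 2 / 4)) ∧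
    1 / (π * δ ^ 2) - 2 / Real.sqrt (π * δ ^ 2 * (1 - δ ^ 2 / 4)) ≥
      16 * (1 / π - Real.sqrt (16 / (63 * π))) ∧
    16 * (1 / π - Real.sqrt (16 / (63 * π))) > 0 ∧
    ∀ t ∈ Set.Icc (1 - δ ^ 2 / 2) 1, 0 < γ t := by
  have hπ := Real.pi_pos
  have hδ2 : δ ^ 2 ≤ 1/16 := by nlinarith
  have hδ2pos : 0 < δ ^ 2 := by positivity
  set c : ℝ := 1 - δ ^ 2 / 2 with hcdef
  have hc1 : c < 1 := by rw [hcdef]; nlinarith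
  have hcm1 : (-1:ℝ) < c := by rw [hcdef]; nlinarith
  have h1c : 1 - c = δ ^ 2 / 2 := by rw [hcdef]; ring
  have h1cpos : 0 < 1 - c := by rw [h1c]; positivity
  have h1cc : 0 < 1 + c := by linarith
  have ha2' : 0 < a + 2 := by linarith
  set C : ℝ := Real.sqrt ((1 + a) / π) * (2 : ℝ) ^ (a / 2) * δ ^ (-(1 + a)) with hCdef
  have hC0 : 0 < C := by
    refine mul_pos (mul_pos ?_ ?_) ?_
    · exact Real.sqrt_pos.mpr (div_pos (by linarith) hπ)
    · exact Real.rpow_pos_of_pos two_pos _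
    · exact Real.rpow_pos_of_pos hδ0 _
  set Q : ℝ := Real.sqrt (π * δ ^ 2 * (1 - δ ^ 2 / 4)) with hQdef
  have hQarg : 0 < π * δ ^ 2 * (1 - δ ^ 2 / 4) := mul_pos (mul_pos hπ hδ2pos) (by nlinarith)
  have hQpos : 0 < Q := Real.sqrt_pos.mpr hQarg
  set Ifin : ℝ := C * (1 + c) ^ (-(1/2:ℝ)) * (2/(a+2)) * (1-c) ^ ((a+2)/2) with hIdef
  have hIpos : 0 < Ifin := by
    refine mul_pos (mul_pos (mul_pos hC0 ?_) ?_) ?_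
    · exact Real.rpow_pos_of_pos h1cc _
    · positivity
    · exact Real.rpow_pos_of_pos h1cpos _
  -- integrability
  have hIoo : IntegrableOn γ (Set.Ioo c 1) := hint.mono_set (Set.Ioo_subset_Ioo hcm1.le le_rfl)
  have hIcc : IntegrableOn γ (Set.Icc c 1) := by
    rw [integrableOn_Icc_iff_integrableOn_Ioo]; exact hIoo
  have hII : IntervalIntegrable γ volume c 1 := by
    rw [intervalIntegrable_iff_integrableOn_Ioc_of_le hc1.le,
      integrableOn_Ioc_iff_integrableOn_Ioo]
    exact hIoo
  have hII2 : IntervalIntegrable γ volume (-1) c := by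
    rw [intervalIntegrable_iff_integrableOn_Ioc_of_le (by linarith)]
    exact hint.mono_set (Set.Ioc_subset_Ioo_right hc1)
  -- normalization on [c,1]
  have hval : ∫ t in c..1, γ t = 1/(2*π) := by
    have hsp := intervalIntegral.integral_add_adjacent_intervals hII2 hII
    have h0 : ∫ t in (-1:ℝ)..c, γ t = 0 := by
      rw [intervalIntegral.integral_of_le (by linarith : (-1:ℝ) ≤ c),
        MeasureTheory.integral_Ioc_eq_integral_Ioo]
      exact MeasureTheory.setIntegral_eq_zero_of_forall_eq_zero (fun x hx => hzero x hx.2)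
    rw [← hsp, h0, zero_add] at hnorm
    field_simp
    linarith
  -- key estimate for T < 1
  have hbound : ∀ T ∈ Set.Ioo c 1, ∫ t in c..T, γ t ≤ γ c * (1-c) - γ c * (1-T) + Ifin := by
    rintro T ⟨hTc, hT1⟩
    have hcT : c ≤ T := hTc.le
    have hIccT : Set.Icc c T ⊆ Set.Ico c 1 := fun x hx => ⟨hx.1, lt_of_le_of_lt hx.2 hT1⟩
    have hγcontT : ContinuousOn γ (Set.Icc c T) := hcont.mono hIccT
    have h1tpos : ∀ x ∈ Set.Icc c T, 0 < 1 - x := fun x hx => by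
      have := hx.2; linarith
    have h1tpos' : ∀ x ∈ Set.Icc c T, 0 < 1 + x := fun x hx => by
      have := hx.1; linarith
    -- continuity of integrands
    have hgbarcont : ContinuousOn
        (fun t => C * (1-t) ^ (-((2-a)/2)) * (1+t) ^ (-(1/2:ℝ)) * (1-t)) (Set.Icc c T) := by
      apply ContinuousOn.mul _ (continuous_const.sub continuous_id).continuousOn
      apply ContinuousOn.mul
      · exact continuousOn_const.mul
          ((continuous_const.sub continuous_id).continuousOn.rpow_const
            (fun x hx => Or.inl (h1tpos x hx).ne'))
      · exact (continuous_const.add continuous_id).continuousOn.rpow_const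
          (fun x hx => Or.inl (h1tpos' x hx).ne')
    have hg2cont : ContinuousOn
        (fun t => C * (1+c) ^ (-(1/2:ℝ)) * (1-t) ^ (a/2)) (Set.Icc c T) :=
      continuousOn_const.mul
        ((continuous_const.sub continuous_id).continuousOn.rpow_const
          (fun x hx => Or.inl (h1tpos x hx).ne'))
    have hgint : IntervalIntegrable
        (fun t => C * (1-t) ^ (-((2-a)/2)) * (1+t) ^ (-(1/2:ℝ)) * (1-t)) volume c T := by
      apply ContinuousOn.intervalIntegrable
      rwa [Set.uIcc_of_le hcT]
    have hg2int : IntervalIntegrable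
        (fun t => C * (1+c) ^ (-(1/2:ℝ)) * (1-t) ^ (a/2)) volume c T := by
      apply ContinuousOn.intervalIntegrable
      rwa [Set.uIcc_of_le hcT]
    -- FTC for Φ t = γ t (1-t) + ∫ c..t γ
    have hprimint : IntegrableOn γ (Set.uIcc c T) := by
      rw [Set.uIcc_of_le hcT]
      exact hIcc.mono_set (Set.Icc_subset_Icc le_rfl hT1.le)
    have hΦcont : ContinuousOn (fun t => γ t * (1-t) + ∫ s in c..t, γ s) (Set.Icc c T) := by
      apply ContinuousOn.add
      · exact hγcontT.mul (continuous_const.sub continuous_id).continuousOn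
      · have := intervalIntegral.continuousOn_primitive_interval hprimint
        rwa [Set.uIcc_of_le hcT] at this
    have hΦderiv : ∀ t ∈ Set.Ioo c T,
        HasDerivWithinAt (fun t => γ t * (1-t) + ∫ s in c..t, γ s)
          (C * (1-t) ^ (-((2-a)/2)) * (1+t) ^ (-(1/2:ℝ)) * (1-t)) (Set.Ioi t) t := by
      intro t ht
      have ht1 : t < 1 := ht.2.trans hT1
      have hd := hderiv t ⟨ht.1, ht1⟩
      have hnbhd : Set.Ico c 1 ∈ nhds t := Ico_mem_nhds ht.1 ht1
      have hca : ContinuousAt γ t := hcont.continuousAt hnbhd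
      have hmeas : StronglyMeasurableAtFilter γ (nhds t) :=
        ⟨Set.Ico c 1, hnbhd, hcont.aestronglyMeasurable measurableSet_Ico⟩
      have hint_ct : IntervalIntegrable γ volume c t := by
        apply ContinuousOn.intervalIntegrable
        rw [Set.uIcc_of_le ht.1.le]
        exact hγcontT.mono (Set.Icc_subset_Icc le_rfl ht.2.le)
      have hprim : HasDerivAt (fun u => ∫ s in c..u, γ s) (γ t) t :=
        intervalIntegral.integral_hasDerivAt_right hint_ct hmeas hca
      have h1 : HasDerivAt (fun u : ℝ => 1 - u) (-1) t := by
        simpa using (hasDerivAt_id t).const_sub (1:ℝ)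
      have hcc8 := (hd.mul h1).add hprim
      have : HasDerivAt (fun t => γ t * (1-t) + ∫ s in c..t, γ s)
          (C * (1-t) ^ (-((2-a)/2)) * (1+t) ^ (-(1/2:ℝ)) * (1-t)) t := by
        refine hcc8.congr_deriv ?_
        ring
      exact this.hasDerivWithinAt
    have hftc := intervalIntegral.integral_eq_sub_of_hasDeriv_right_of_le hcT hΦcont hΦderiv hgint
    rw [intervalIntegral.integral_same] at hftc
    -- pointwise comparison
    have hptwise : ∀ t ∈ Set.Icc c T,
        C * (1-t) ^ (-((2-a)/2)) * (1+t) ^ (-(1/2:ℝ)) * (1-t)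
          ≤ C * (1+c) ^ (-(1/2:ℝ)) * (1-t) ^ (a/2) := by
      intro t ht
      have h1t : 0 < 1 - t := h1tpos t ht
      have h1t' : 0 < 1 + t := h1tpos' t ht
      have hkey : C * (1-t) ^ (-((2-a)/2)) * (1+t) ^ (-(1/2:ℝ)) * (1-t)
          = C * (1-t) ^ (a/2) * (1+t) ^ (-(1/2:ℝ)) := by
        rw [show C * (1-t) ^ (-((2-a)/2)) * (1+t) ^ (-(1/2:ℝ)) * (1-t)
            = C * ((1-t) ^ (-((2-a)/2)) * (1-t) ^ (1:ℝ)) * (1+t) ^ (-(1/2:ℝ)) by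
          rw [Real.rpow_one]; ring]
        rw [← Real.rpow_add h1t, show -((2-a)/2) + 1 = a/2 by ring]
      rw [hkey]
      have hrp : (1+t) ^ (-(1/2:ℝ)) ≤ (1+c) ^ (-(1/2:ℝ)) :=
        Real.rpow_le_rpow_of_nonpos h1cc (by linarith [ht.1]) (by norm_num)
      calc C * (1-t) ^ (a/2) * (1+t) ^ (-(1/2:ℝ))
          ≤ C * (1-t) ^ (a/2) * (1+c) ^ (-(1/2:ℝ)) := by
            apply mul_le_mul_of_nonneg_left hrp
            positivity
        _ = C * (1+c) ^ (-(1/2:ℝ)) * (1-t) ^ (a/2) := by ring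
    have hmono_int := intervalIntegral.integral_mono_on hcT hgint hg2int hptwise
    -- evaluate the comparison integral
    have hFd : ∀ t ∈ Set.Ioo c T,
        HasDerivWithinAt (fun t => -(C * (1+c) ^ (-(1/2:ℝ)) * (2/(a+2))) * (1-t) ^ ((a+2)/2))
          (C * (1+c) ^ (-(1/2:ℝ)) * (1-t) ^ (a/2)) (Set.Ioi t) t := by
      intro t ht
      have h1t : 0 < 1 - t := by have := ht.2; have : t < 1 := ht.2.trans hT1; linarith
      have h1 : HasDerivAt (fun u : ℝ => 1 - u) (-1) t := by
        simpa using (hasDerivAt_id t).const_sub (1:ℝ)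
      have h2 := (h1.rpow_const (p := (a+2)/2) (Or.inl h1t.ne')).const_mul
        (-(C * (1+c) ^ (-(1/2:ℝ)) * (2/(a+2))))
      have : HasDerivAt (fun t => -(C * (1+c) ^ (-(1/2:ℝ)) * (2/(a+2))) * (1-t) ^ ((a+2)/2))
          (C * (1+c) ^ (-(1/2:ℝ)) * (1-t) ^ (a/2)) t := by
        refine h2.congr_deriv ?_
        rw [show (a+2)/2 - 1 = a/2 by ring]
        field_simp
      exact this.hasDerivWithinAt
    have hFcont : ContinuousOn
        (fun t => -(C * (1+c) ^ (-(1/2:ℝ)) * (2/(a+2))) * (1-t) ^ ((a+2)/2)) (Set.Icc c T) :=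
      continuousOn_const.mul
        ((continuous_const.sub continuous_id).continuousOn.rpow_const
          (fun x hx => Or.inl (h1tpos x hx).ne'))
    have heval := intervalIntegral.integral_eq_sub_of_hasDeriv_right_of_le hcT hFcont hFd hg2int
    have hIle : ∫ t in c..T, C * (1-t) ^ (-((2-a)/2)) * (1+t) ^ (-(1/2:ℝ)) * (1-t) ≤ Ifin := by
      have h1T : (0:ℝ) ≤ (1 - T) ^ ((a+2)/2) := Real.rpow_nonneg (by linarith) _
      have hKpos : (0:ℝ) ≤ C * (1+c) ^ (-(1/2:ℝ)) * (2/(a+2)) := by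
        have := Real.rpow_pos_of_pos h1cc (-(1/2:ℝ))
        positivity
      calc ∫ t in c..T, C * (1-t) ^ (-((2-a)/2)) * (1+t) ^ (-(1/2:ℝ)) * (1-t)
          ≤ ∫ t in c..T, C * (1+c) ^ (-(1/2:ℝ)) * (1-t) ^ (a/2) := hmono_int
        _ = -(C * (1+c) ^ (-(1/2:ℝ)) * (2/(a+2))) * (1-T) ^ ((a+2)/2)
            - -(C * (1+c) ^ (-(1/2:ℝ)) * (2/(a+2))) * (1-c) ^ ((a+2)/2) := heval
        _ ≤ C * (1+c) ^ (-(1/2:ℝ)) * (2/(a+2)) * (1-c) ^ ((a+2)/2) := by nlinarith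
        _ = Ifin := by rw [hIdef]
    -- monotonicity of γ
    have hγcT : γ c ≤ γ T := hmono ⟨le_rfl, hc1.le⟩ ⟨hcT, hT1.le⟩ hcT
    have hγT : γ c * (1-T) ≤ γ T * (1-T) :=
      mul_le_mul_of_nonneg_right hγcT (by linarith)
    have hA : ∫ t in c..T, γ t
        = (∫ t in c..T, C * (1-t) ^ (-((2-a)/2)) * (1+t) ^ (-(1/2:ℝ)) * (1-t))
          + (γ c * (1-c) + 0) - γ T * (1-T) := by
      rw [hftc]; ring
    rw [hA]
    linarith [hIle, hγT]
  -- limit T → 1⁻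
  have hlim1 : Filter.Tendsto (fun T => ∫ t in c..T, γ t) (nhdsWithin 1 (Set.Iio 1))
      (nhds (∫ t in c..1, γ t)) := by
    have hcp : ContinuousOn (fun x => ∫ t in c..x, γ t) (Set.Icc c 1) := by
      have h := intervalIntegral.continuousOn_primitive_interval
        (a := c) (b := 1) (μ := volume) (f := γ) (by rwa [Set.uIcc_of_le hc1.le])
      rwa [Set.uIcc_of_le hc1.le] at h
    have hcw := (hcp 1 (Set.right_mem_Icc.mpr hc1.le)).tendsto
    apply hcw.mono_left
    rw [← nhdsWithin_Ioo_eq_nhdsLT hc1]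
    exact nhdsWithin_mono 1 Set.Ioo_subset_Icc_self
  have hlim2 : Filter.Tendsto (fun T : ℝ => γ c * (1-c) - γ c * (1-T) + Ifin)
      (nhdsWithin 1 (Set.Iio 1)) (nhds (γ c * (1-c) - γ c * (1-1) + Ifin)) := by
    apply Filter.Tendsto.mono_left _ nhdsWithin_le_nhds
    exact Continuous.tendsto (by continuity) 1
  have hineq2 : ∫ t in c..1, γ t ≤ γ c * (1-c) - γ c * (1-1) + Ifin := by
    refine le_of_tendsto_of_tendsto hlim1 hlim2 ?_
    filter_upwards [Ioo_mem_nhdsLT_of_mem (⟨hc1, le_rfl⟩ : (1:ℝ) ∈ Set.Ioc c 1)] with T hT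
    exact hbound T hT
  have hkey1 : 1/(2*π) ≤ γ c * (δ ^ 2 / 2) + Ifin := by
    rw [← hval, ← h1c]
    linarith [hineq2]
  -- strict bound Ifin * Q < δ^2
  have hsq_rpow : ∀ x : ℝ, 0 < x → ∀ p : ℝ, (x ^ p)^2 = x ^ (2*p) := by
    intro x hx p
    rw [sq, ← Real.rpow_add hx, two_mul]
  have hIQ : Ifin * Q < δ ^ 2 := by
    have hQ2 : Q^2 = π * δ ^ 2 * (1 - δ ^ 2 / 4) := Real.sq_sqrt hQarg.le
    have hC2 : C^2 = (1+a)/π * (2:ℝ)^a * δ ^ (-(2+2*a)) := by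
      rw [hCdef, mul_pow, mul_pow, Real.sq_sqrt (le_of_lt (div_pos (by linarith) hπ)),
        hsq_rpow 2 two_pos, hsq_rpow δ hδ0,
        show 2*(a/2) = a by ring, show 2*(-(1+a)) = -(2+2*a) by ring]
    have h2 : ((1+c) ^ (-(1/2:ℝ)))^2 = (1+c)⁻¹ := by
      rw [hsq_rpow _ h1cc, show 2*(-(1/2:ℝ)) = -1 by norm_num, Real.rpow_neg_one]
    have h3 : ((1-c) ^ ((a+2)/2))^2 = δ ^ (2*(a+2)) / (2:ℝ)^(a+2) := by
      rw [h1c, hsq_rpow _ (by positivity : (0:ℝ) < δ^2/2), show 2*((a+2)/2) = a+2 by ring,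
        Real.div_rpow (sq_nonneg δ) (by norm_num : (0:ℝ) ≤ 2),
        ← Real.rpow_natCast δ 2, ← Real.rpow_mul hδ0.le]
      norm_num
    have e5 : δ ^ (-(2+2*a)) * δ ^ (2*(a+2)) = δ ^ 2 := by
      rw [← Real.rpow_add hδ0, show -(2+2*a) + 2*(a+2) = (2:ℝ) by ring,
        show (2:ℝ) = ((2:ℕ):ℝ) by norm_num, Real.rpow_natCast]
    have e6 : (2:ℝ)^a / (2:ℝ)^(a+2) = 1/4 := by
      rw [← Real.rpow_sub two_pos, show a - (a+2) = (-2:ℝ) by ring,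
        show (-2:ℝ) = ((-2:ℤ):ℝ) by norm_num, Real.rpow_intCast]
      norm_num
    have expand : Ifin^2 = C^2 * ((1+c) ^ (-(1/2:ℝ)))^2 * (2/(a+2))^2
        * ((1-c) ^ ((a+2)/2))^2 := by rw [hIdef]; ring
    rw [hC2, h2, h3] at expand
    have h1ceq : 1 + c = 2 - δ ^ 2/2 := by rw [hcdef]; ring
    have hIfin2' : (Ifin * Q)^2 = (1+a) * (δ ^ 2)^2 / (2*(a+2)^2) := by
      calc (Ifin * Q)^2 = Ifin^2 * Q^2 := by ring
        _ = ((1+a)/π) * (1+c)⁻¹ * ((2/(a+2))^2) * (π * δ ^ 2 * (1 - δ ^ 2/4))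
            * ((2:ℝ)^a / (2:ℝ)^(a+2)) * (δ ^ (-(2+2*a)) * δ ^ (2*(a+2))) := by
            rw [expand, hQ2]; ring
        _ = ((1+a)/π) * (1+c)⁻¹ * ((2/(a+2))^2) * (π * δ ^ 2 * (1 - δ ^ 2/4))
            * (1/4) * (δ ^ 2) := by rw [e5, e6]
        _ = (1+a) * (δ ^ 2)^2 / (2*(a+2)^2) := by
            have hne : (2:ℝ) - δ ^ 2/2 ≠ 0 := by nlinarith
            have hane : (a:ℝ) + 2 ≠ 0 := by linarith
            have habs : ∀ A x y w d : ℝ, x ≠ 0 → y ≠ 0 → w ≠ 0 →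
                (A/x) * y⁻¹ * ((2/w)^2) * (x*d*(y/2)) * (1/4) * d = A * d^2/(2*w^2) := by
              intro A x y w d hx hy hw
              field_simp
              ring
            rw [h1ceq, show (1:ℝ) - δ ^ 2/4 = (2 - δ ^ 2/2)/2 by ring]
            exact habs (1+a) π (2 - δ ^ 2/2) (a+2) (δ ^ 2) hπ.ne' hne hane
    have hlt : (Ifin * Q)^2 < (δ ^ 2)^2 := by
      rw [hIfin2']
      rw [div_lt_iff₀ (by positivity)]
      nlinarith [mul_pos (pow_pos hδ2pos 2)
        (show (0:ℝ) < 2*a^2+7*a+7 by nlinarith [sq_nonneg (2*a+7/2)])]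
    have := lt_of_pow_lt_pow_left₀ 2 (by positivity : (0:ℝ) ≤ δ ^ 2) hlt
    exact this
  -- conclude the first bullet
  have hb1 : γ c > 1 / (π * δ ^ 2) - 2 / Q := by
    have h2' : 2 * Ifin / δ ^ 2 < 2 / Q := by
      rw [div_lt_div_iff₀ hδ2pos hQpos]
      nlinarith [hIQ]
    have hmain : 1 / (π * δ ^ 2) - 2 * Ifin / δ ^ 2 ≤ γ c := by
      have e : 1 / (π * δ ^ 2) = (1/(2*π)) * (2/δ ^ 2) := by
        field_simp
      have hmul := mul_le_mul_of_nonneg_right hkey1 (by positivity : (0:ℝ) ≤ 2/δ ^ 2)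
      have e2 : (γ c * (δ ^ 2/2) + Ifin) * (2/δ ^ 2) = γ c + 2 * Ifin / δ ^ 2 := by
        field_simp
      rw [e2] at hmul
      rw [e]
      linarith
    linarith
  refine ⟨hb1, aux2' δ hδ0 hδ, aux3', ?_⟩
  intro t ht
  have hγct : γ c ≤ γ t := hmono ⟨le_rfl, hc1.le⟩ ht ht.1
  have hnum := aux2' δ hδ0 hδ
  have hnum3 := aux3'
  calc (0:ℝ) < 16 * (1 / π - Real.sqrt (16 / (63 * π))) := hnum3
    _ ≤ 1 / (π * δ ^ 2) - 2 / Q := hnum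
    _ < γ c := hb1
    _ ≤ γ t := hγct
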